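/- arXiv:1904.04621 — 3 statements merged into one kernel-verified Lean document; each statement's English description precedes it below -/
import Mathlib

section
/- Let f : ℝ² → ℝ be continuous, α > 0, and for bounds a₁ < b₁, a₂ < b₂ define outer bounds A_i = a_i - α·(b_i-a_i)/2 and B_i = b_i + α·(b_i-a_i)/2 for i = 1,2, and the loss L(a₁,a₂,b₁,b₂) = ∫_{A₂}^{B₂} ∫_{A₁}^{B₁} f(u,v) du dv - 2·∫_{a₂}^{b₂} ∫_{a₁}^{b₁} f(u,v) du dv. Then ∂L/∂a₁ = -(1 + α/2)·∫_{A₂}^{B₂} f(A₁,v) dv - (α/2)·∫_{A₂}^{B₂} f(B₁,v) dv + 2·∫_{a₂}^{b₂} f(a₁,v) dv. -/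
open MeasureTheory intervalIntegral Function

/-! After Fubini both double integrals become single integrals in `u` of the continuous row
integrals `u ↦ ∫ v, f u v`, whose endpoints depend affinely on `a₁`; the derivative is then the
fundamental theorem of calculus with moving endpoints, the outer endpoints moving with speeds
`1 + α / 2` and `-α / 2`. -/

variable {E : Type*} [NormedAddCommGroup E] [NormedSpace ℝ E]

theorem intervalIntegral_intervalIntegral_swap_of_continuous {F : ℝ → ℝ → E}
    (hF : Continuous (uncurry F)) (a b c d : ℝ) :
    ∫ y in c..d, ∫ x in a..b, F x y = ∫ x in a..b, ∫ y in c..d, F x y := by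
  refine (intervalIntegral_intervalIntegral_swap ?_).symm
  exact hF.continuousOn.integrableOn_compact (μ := volume)
    (isCompact_uIcc.prod isCompact_uIcc) |>.mono_set
    (Set.prod_mono Set.uIoc_subset_uIcc Set.uIoc_subset_uIcc)

theorem Continuous.hasDerivAt_intervalIntegral_comp [CompleteSpace E] {F : ℝ → E}
    (hF : Continuous F) {c d : ℝ → ℝ} {c' d' x : ℝ} (hc : HasDerivAt c c' x)
    (hd : HasDerivAt d d' x) :
    HasDerivAt (fun y => ∫ u in c y..d y, F u) (d' • F (d x) - c' • F (c x)) x := by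
  have hprim (y : ℝ) : HasDerivAt (fun z => ∫ u in (0 : ℝ)..z, F u) (F y) y :=
    (hF.integral_hasStrictDerivAt 0 y).hasDerivAt
  have hsplit : (fun y => ∫ u in c y..d y, F u)
      = fun y => (∫ u in (0 : ℝ)..d y, F u) - ∫ u in (0 : ℝ)..c y, F u := by
    funext y
    rw [integral_interval_sub_left (hF.intervalIntegrable _ _) (hF.intervalIntegrable _ _)]
  rw [hsplit]
  exact ((hprim (d x)).scomp x hd).sub ((hprim (c x)).scomp x hc)

theorem oir_black_box_2d_partial_a1_general
    (f : ℝ → ℝ → ℝ) (hf : Continuous fun p : ℝ × ℝ => f p.1 p.2)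
    (α a₁ a₂ b₁ b₂ : ℝ) :
    HasDerivAt
      (fun x => (∫ v in (a₂ - α * (b₂ - a₂) / 2)..(b₂ + α * (b₂ - a₂) / 2),
          ∫ u in (x - α * (b₁ - x) / 2)..(b₁ + α * (b₁ - x) / 2), f u v)
        - 2 * ∫ v in a₂..b₂, ∫ u in x..b₁, f u v)
      (-(1 + α / 2) * (∫ v in (a₂ - α * (b₂ - a₂) / 2)..(b₂ + α * (b₂ - a₂) / 2),
          f (a₁ - α * (b₁ - a₁) / 2) v)
        - α / 2 * (∫ v in (a₂ - α * (b₂ - a₂) / 2)..(b₂ + α * (b₂ - a₂) / 2),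
          f (b₁ + α * (b₁ - a₁) / 2) v)
        + 2 * ∫ v in a₂..b₂, f a₁ v) a₁ := by
  simp_rw [intervalIntegral_intervalIntegral_swap_of_continuous hf]
  have hrow (c d : ℝ) : Continuous fun u => ∫ v in c..d, f u v :=
    continuous_parametric_intervalIntegral_of_continuous' hf c d
  have hlower : HasDerivAt (fun x => x - α * (b₁ - x) / 2) (1 + α / 2) a₁ :=
    ((hasDerivAt_id a₁).sub ((((hasDerivAt_id a₁).const_sub b₁).const_mul α).div_const 2))
      |>.congr_deriv (by ring)
  have hupper : HasDerivAt (fun x => b₁ + α * (b₁ - x) / 2) (-(α / 2)) a₁ :=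
    ((hasDerivAt_const a₁ b₁).add ((((hasDerivAt_id a₁).const_sub b₁).const_mul α).div_const 2))
      |>.congr_deriv (by ring)
  exact (((hrow _ _).hasDerivAt_intervalIntegral_comp hlower hupper).sub
    (((hrow a₂ b₂).hasDerivAt_intervalIntegral_comp (hasDerivAt_id a₁)
      (hasDerivAt_const a₁ b₁)).const_mul 2)).congr_deriv
    (by simp only [id_eq, smul_eq_mul]; ring)

/-- 2D black-box OIR loss, partial derivative with respect to `a₁`. -/
theorem oir_black_box_2d_partial_a1
    (f : ℝ → ℝ → ℝ) (hf : Continuous fun p : ℝ × ℝ => f p.1 p.2)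
    (α a₁ a₂ b₁ b₂ : ℝ) (hα : 0 < α) (h1 : a₁ < b₁) (h2 : a₂ < b₂) :
    HasDerivAt
      (fun x => (∫ v in (a₂ - α * (b₂ - a₂) / 2)..(b₂ + α * (b₂ - a₂) / 2),
          ∫ u in (x - α * (b₁ - x) / 2)..(b₁ + α * (b₁ - x) / 2), f u v)
        - 2 * ∫ v in a₂..b₂, ∫ u in x..b₁, f u v)
      (-(1 + α / 2) * (∫ v in (a₂ - α * (b₂ - a₂) / 2)..(b₂ + α * (b₂ - a₂) / 2),
          f (a₁ - α * (b₁ - a₁) / 2) v)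
        - α / 2 * (∫ v in (a₂ - α * (b₂ - a₂) / 2)..(b₂ + α * (b₂ - a₂) / 2),
          f (b₁ + α * (b₁ - a₁) / 2) v)
        + 2 * ∫ v in a₂..b₂, f a₁ v) a₁ :=
  oir_black_box_2d_partial_a1_general f hf α a₁ a₂ b₁ b₂
end

section
/- Let f : ℝ → ℝ be continuous, α > 0 and β > 0, define A = a - α·(b-a)/2, B = b + α·(b-a)/2, and the white-box outer-inner loss L(a,b) = (β/α)·∫_A^B f(u) du - (1 + β/α)·∫_a^b f(u) du. Then ∂L/∂b = (β/α)·(f(B) - f(b)) + (β/2)·f(B) + (β/2)·f(A) - f(b). -/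
open intervalIntegral

theorem Continuous.hasDerivAt_integral_of_hasDerivAt {E : Type*} [NormedAddCommGroup E]
    [NormedSpace ℝ E] [CompleteSpace E] {f : ℝ → E} (hf : Continuous f) {lo hi : ℝ → ℝ}
    {lo' hi' x : ℝ} (hlo : HasDerivAt lo lo' x) (hhi : HasDerivAt hi hi' x) :
    HasDerivAt (fun t => ∫ u in lo t..hi t, f u) (hi' • f (hi x) - lo' • f (lo x)) x := by
  have hF : ∀ y, HasDerivAt (fun v => ∫ u in (0 : ℝ)..v, f u) (f y) y := fun y =>
    (hf.integral_hasStrictDerivAt 0 y).hasDerivAt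
  have hsplit : (fun t => ∫ u in lo t..hi t, f u) =
      fun t => (∫ u in (0 : ℝ)..hi t, f u) - ∫ u in (0 : ℝ)..lo t, f u := by
    funext t
    exact (integral_interval_sub_left (hf.intervalIntegrable _ _)
      (hf.intervalIntegrable _ _)).symm
  rw [hsplit]
  exact ((hF (hi x)).scomp x hhi).sub ((hF (lo x)).scomp x hlo)

theorem oir_white_box_partial_b_general
    (f : ℝ → ℝ) (hf : Continuous f) (α β a b : ℝ) (hα : 0 < α) :
    HasDerivAt
      (fun b' => β / α * (∫ u in (a - α * (b' - a) / 2)..(b' + α * (b' - a) / 2), f u)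
        - (1 + β / α) * ∫ u in a..b', f u)
      (β / α * (f (b + α * (b - a) / 2) - f b)
        + β / 2 * f (b + α * (b - a) / 2) + β / 2 * f (a - α * (b - a) / 2) - f b) b := by
  have hspread : HasDerivAt (fun b' : ℝ => α * (b' - a) / 2) (α * 1 / 2) b :=
    (((hasDerivAt_id' b).sub_const a).const_mul α).div_const 2
  have hOuter := hf.hasDerivAt_integral_of_hasDerivAt (hspread.const_sub a)
    ((hasDerivAt_id' b).fun_add hspread)
  have hInner := (hf.integral_hasStrictDerivAt a b).hasDerivAt
  refine ((hOuter.const_mul (β / α)).sub (hInner.const_mul (1 + β / α))).congr_deriv ?_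
  rw [smul_eq_mul, smul_eq_mul]
  field_simp
  ring

/-- white-box OIR loss
`L a b = (β/α) ∫_A^B f - (1 + β/α) ∫_a^b f` with `A = a - α(b-a)/2`, `B = b + α(b-a)/2`;
`∂L/∂b = (β/α)(f B - f b) + (β/2) f B + (β/2) f A - f b`. -/
theorem oir_white_box_partial_b
    (f : ℝ → ℝ) (hf : Continuous f) (α β a b : ℝ) (hα : 0 < α) (hβ : 0 < β) :
    HasDerivAt
      (fun b' => β / α * (∫ u in (a - α * (b' - a) / 2)..(b' + α * (b' - a) / 2), f u)
        - (1 + β / α) * ∫ u in a..b', f u)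
      (β / α * (f (b + α * (b - a) / 2) - f b)
        + β / 2 * f (b + α * (b - a) / 2) + β / 2 * f (a - α * (b - a) / 2) - f b) b :=
  oir_white_box_partial_b_general f hf α β a b hα
end

section
/- Let a ≤ b be real numbers, let 𝕃 ≥ 0, and let f : ℝ → ℝ be differentiable on [a,b] with |f′(x)| ≤ 𝕃 for all x ∈ [a,b]. Then the error of the trapezoidal approximation of the definite integral satisfies |∫_a^b f(u) du - (b-a)·(f(a)+f(b))/2| ≤ 𝕃·(b-a)². -/
/-- trapezoidal rule error bound. If `f` is differentiable on `[a,b]`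
with derivative bounded in absolute value by `𝕃 ≥ 0`, then
`|∫_a^b f - (b-a)(f a + f b)/2| ≤ 𝕃 (b-a)²`. -/
theorem trapezoid_error_bound
    (f : ℝ → ℝ) (a b L : ℝ) (hab : a ≤ b) (hL : 0 ≤ L)
    (hdiff : DifferentiableOn ℝ f (Set.Icc a b))
    (hbound : ∀ x ∈ Set.Icc a b, |derivWithin f (Set.Icc a b) x| ≤ L) :
    |(∫ u in a..b, f u) - (b - a) * (f a + f b) / 2| ≤ L * (b - a) ^ 2 := by
  have hlip : ∀ x ∈ Set.Icc a b, ∀ y ∈ Set.Icc a b, |f x - f y| ≤ L * |x - y| := by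
    intro x hx y hy
    have := (convex_Icc a b).norm_image_sub_le_of_norm_derivWithin_le hdiff
      (fun z hz => by simpa using hbound z hz) hy hx
    simpa [Real.norm_eq_abs] using this
  have hmem : ∀ u ∈ Set.Icc a b, |f u - (f a + f b) / 2| ≤ L * (b - a) / 2 := by
    intro u hu
    have ha : a ∈ Set.Icc a b := Set.left_mem_Icc.2 hab
    have hb : b ∈ Set.Icc a b := Set.right_mem_Icc.2 hab
    have h1 : |f u - f a| ≤ L * (u - a) := by
      have := hlip u hu a ha
      rwa [abs_of_nonneg (by linarith [hu.1] : (0:ℝ) ≤ u - a)] at this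
    have h2 : |f u - f b| ≤ L * (b - u) := by
      have := hlip u hu b hb
      rwa [abs_sub_comm u b, abs_of_nonneg (by linarith [hu.2] : (0:ℝ) ≤ b - u)] at this
    have : f u - (f a + f b) / 2 = ((f u - f a) + (f u - f b)) / 2 := by ring
    rw [this]
    calc |((f u - f a) + (f u - f b)) / 2| ≤ (|f u - f a| + |f u - f b|) / 2 := by
          rw [abs_div, show |(2:ℝ)| = 2 by norm_num]
          have := abs_add_le (f u - f a) (f u - f b)
          linarith
      _ ≤ (L * (u - a) + L * (b - u)) / 2 := by linarith
      _ = L * (b - a) / 2 := by ring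
  have hcont : ContinuousOn f (Set.Icc a b) := hdiff.continuousOn
  have hint : IntervalIntegrable f MeasureTheory.volume a b :=
    (hcont.mono (by rw [Set.uIcc_of_le hab])).intervalIntegrable
  have hsplit : (∫ u in a..b, f u) - (b - a) * (f a + f b) / 2
      = ∫ u in a..b, (f u - (f a + f b) / 2) := by
    rw [intervalIntegral.integral_sub hint (intervalIntegrable_const)]
    rw [intervalIntegral.integral_const, smul_eq_mul]
    ring
  rw [hsplit]
  have := intervalIntegral.norm_integral_le_of_norm_le_const
    (C := L * (b - a) / 2) (f := fun u => f u - (f a + f b) / 2) (a := a) (b := b)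
    (fun x hx => by
      have hx' : x ∈ Set.Icc a b := Set.mem_Icc_of_Ioc (by rwa [Set.uIoc_of_le hab] at hx)
      simpa [Real.norm_eq_abs] using hmem x hx')
  rw [Real.norm_eq_abs] at this
  calc |∫ u in a..b, (f u - (f a + f b) / 2)| ≤ L * (b - a) / 2 * |b - a| := this
    _ = L * (b - a) ^ 2 / 2 := by rw [abs_of_nonneg (by linarith : (0:ℝ) ≤ b - a)]; ring
    _ ≤ L * (b - a) ^ 2 := by nlinarith [sq_nonneg (b - a)]
end
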